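/- For integers m ≥ 0 and 0 ≤ j ≤ 2m+1, the middle-row entries of the symmetric Krawtchouk matrix of order 2m+1 satisfy C(2m+1, j) · Φ^{2m+1}_{m,j} = (−1)^{⌊j/2⌋} · C(m, ⌊j/2⌋) · C(2m+1, m). -/

import Mathlib

/-!
The matrix `C(N, j) Φ^N_{n,j}` is symmetric in `n` and `j`: termwise, both
`C(N,j) C(j,k) C(N-j,n-k)` and `C(N,n) C(n,k) C(N-n,j-k)` count the ways to split `N` objects
into blocks of sizes `k`, `j - k`, `n - k`, `N - j - n + k`. For `N = 2m+1` and `n = m` this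
turns the middle row into a column, `Φ^{2m+1}_{j,m} = [z^j] (1+z)^{m+1} (1-z)^m`, and
`(1+z)^{m+1} (1-z)^m = (1-z²)^m (1+z)`, whose `j`-th coefficient is
`(-1)^⌊j/2⌋ C(m, ⌊j/2⌋)`.
-/

open Polynomial Finset

/-- Symmetric Krawtchouk values:
`Φ^N_{n,j} = ∑_k (-1)^k C(j,k) C(N-j, n-k)`, the coefficient of `z^n` in
`(1+z)^(N-j) (1-z)^j`. -/
def symKrawtchouk (N n j : ℕ) : ℤ :=
  ∑ k ∈ Finset.range (j + 1),
    if k ≤ n then (-1 : ℤ) ^ k * (j.choose k) * ((N - j).choose (n - k)) else 0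

theorem Nat.choose_mul_choose_sub_comm (M a b : ℕ) :
    M.choose a * (M - a).choose b = M.choose b * (M - b).choose a := by
  have ha := Nat.choose_mul (n := M) (Nat.le_add_right a b)
  have hb := Nat.choose_mul (n := M) (Nat.le_add_left b a)
  rw [Nat.add_sub_cancel_left] at ha
  rw [Nat.add_sub_cancel] at hb
  rw [← ha, ← hb, Nat.choose_symm_add]

theorem Nat.choose_mul_choose_mul_choose_sub_comm {N j n k : ℕ} (hkj : k ≤ j) (hkn : k ≤ n) :
    N.choose j * j.choose k * (N - j).choose (n - k) =
      N.choose n * n.choose k * (N - n).choose (j - k) := by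
  rw [Nat.choose_mul hkj, Nat.choose_mul hkn, mul_assoc, mul_assoc,
    show N - j = N - k - (j - k) by omega, show N - n = N - k - (n - k) by omega,
    Nat.choose_mul_choose_sub_comm]

theorem Polynomial.coeff_one_sub_X_pow {R : Type*} [CommRing R] (n k : ℕ) :
    ((1 - X : R[X]) ^ n).coeff k = (-1) ^ k * n.choose k := by
  have h : (1 - X : R[X]) ^ n = C ((-1) ^ n) * (X + C (-1)) ^ n := by
    rw [C_pow, ← mul_pow, map_neg, map_one]
    ring
  rw [h, coeff_C_mul, coeff_X_add_C_pow]
  rcases le_or_gt k n with hkn | hnk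
  · obtain ⟨i, rfl⟩ := Nat.exists_eq_add_of_le hkn
    have hsq : ((-1 : R) ^ i) * (-1) ^ i = 1 := by rw [← mul_pow]; simp
    rw [Nat.add_sub_cancel_left, pow_add]
    linear_combination ((-1) ^ k * ((k + i).choose k : R)) * hsq
  · simp [Nat.choose_eq_zero_of_lt hnk]

theorem Polynomial.coeff_expand_two_mul_one_add_X {R : Type*} [CommSemiring R] (p : R[X])
    (j : ℕ) : (expand R 2 p * (1 + X)).coeff j = p.coeff (j / 2) := by
  rw [mul_add, mul_one, coeff_add]
  rcases j with _ | j
  · simp [coeff_expand]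
  · rw [coeff_mul_X, coeff_expand two_pos, coeff_expand two_pos]
    rcases Nat.even_or_odd j with ⟨i, rfl⟩ | ⟨i, rfl⟩
    · rw [if_neg (by omega), if_pos (by omega), zero_add]
      congr 1
      omega
    · rw [if_pos (by omega), if_neg (by omega), add_zero]

theorem symKrawtchouk_eq_sum_range_min (N n j : ℕ) :
    symKrawtchouk N n j =
      ∑ k ∈ range (min n j + 1), (-1 : ℤ) ^ k * j.choose k * (N - j).choose (n - k) := by
  rw [symKrawtchouk, ← sum_filter]
  congr 1
  ext k
  simp only [mem_filter, mem_range]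
  omega

theorem choose_mul_symKrawtchouk_comm (N n j : ℕ) :
    (N.choose j : ℤ) * symKrawtchouk N n j = N.choose n * symKrawtchouk N j n := by
  rw [symKrawtchouk_eq_sum_range_min, symKrawtchouk_eq_sum_range_min, min_comm, mul_sum, mul_sum]
  refine sum_congr rfl fun k hk => ?_
  have hk : k ≤ n ∧ k ≤ j := by rw [mem_range] at hk; omega
  have h := congrArg (Nat.cast : ℕ → ℤ)
    (Nat.choose_mul_choose_mul_choose_sub_comm (N := N) hk.2 hk.1)
  push_cast at h
  linear_combination (-1 : ℤ) ^ k * h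

theorem symKrawtchouk_eq_coeff (N n j : ℕ) :
    symKrawtchouk N n j = ((1 + X) ^ (N - j) * (1 - X) ^ j : ℤ[X]).coeff n := by
  rw [symKrawtchouk_eq_sum_range_min, mul_comm, coeff_mul, Nat.sum_antidiagonal_eq_sum_range_succ
    (fun a b => ((1 - X : ℤ[X]) ^ j).coeff a * ((1 + X : ℤ[X]) ^ (N - j)).coeff b)]
  refine (sum_subset (range_subset_range.2 (by omega)) fun k hkn hkmin => ?_).trans
    (sum_congr rfl fun k _ => ?_)
  · have hjk : j < k := by simp only [mem_range] at hkn hkmin; omega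
    rw [Nat.choose_eq_zero_of_lt hjk, Nat.cast_zero, mul_zero, zero_mul]
  · rw [coeff_one_sub_X_pow, coeff_one_add_X_pow]

theorem symKrawtchouk_middle_row_odd_general (m j : ℕ) :
    ((2 * m + 1).choose j : ℤ) * symKrawtchouk (2 * m + 1) m j =
      (-1 : ℤ) ^ (j / 2) * (m.choose (j / 2) : ℤ) * ((2 * m + 1).choose m : ℤ) := by
  have hfactor : ((1 + X) ^ (m + 1) * (1 - X) ^ m : ℤ[X]) =
      expand ℤ 2 ((1 - X) ^ m) * (1 + X) := by
    rw [map_pow, map_sub, map_one, expand_X, show (1 - X ^ 2 : ℤ[X]) = (1 + X) * (1 - X) by ring,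
      mul_pow, pow_succ]
    ring
  rw [choose_mul_symKrawtchouk_comm, symKrawtchouk_eq_coeff, show 2 * m + 1 - m = m + 1 by omega,
    hfactor, coeff_expand_two_mul_one_add_X, coeff_one_sub_X_pow]
  ring

/-- Middle-row entries for odd order `N = 2m+1`:
`C(2m+1,j)·Φ^{2m+1}_{m,j} = (−1)^{⌊j/2⌋}·C(m,⌊j/2⌋)·C(2m+1,m)`. -/
theorem symKrawtchouk_middle_row_odd (m j : ℕ) (hj : j ≤ 2 * m + 1) :
    ((2 * m + 1).choose j : ℤ) * symKrawtchouk (2 * m + 1) m j =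
      (-1 : ℤ) ^ (j / 2) * (m.choose (j / 2) : ℤ) * ((2 * m + 1).choose m : ℤ) :=
  symKrawtchouk_middle_row_odd_general m j
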